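/- (Structural Gradient Asymmetry.) Let π be a probability vector on Fin v, a ∈ Fin v with π_a < 1, scalars r > 0 and A ≠ 0, the error vector E = rA(e_a − π), vectors h, x with ‖h‖₂² ≥ α d and ‖x‖₂² ≤ β d for constants α, β > 0 and d ≥ 1, and a matrix J ∈ ℝᵛˣᵈ' satisfying Σ_j π_j ‖J_{j,:}‖₂² ≤ C and ‖J_{a,:}‖₂² ≤ C for some C > 0. Define G_lm = E hᵀ and G_int = (Jᵀ E) xᵀ. Then ‖G_int‖_F² / ‖G_lm‖_F² ≤ (4βC/α) · 1/(1 − π_a)². -/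
import Mathlib


/-- Structural Gradient Asymmetry: ‖G_int‖_F²/‖G_lm‖_F² ≤ (4βC/α)·(1−π_a)⁻². -/
theorem structural_gradient_asymmetry (v d d' : ℕ) (hd : 1 ≤ d)
    (π : Fin v → ℝ) (a : Fin v) (r A α β C : ℝ)
    (h : Fin d → ℝ) (x : Fin d → ℝ) (J : Fin v → Fin d' → ℝ)
    (hr : 0 < r) (hA : A ≠ 0) (hπa : π a < 1)
    (hnn : ∀ j, 0 ≤ π j) (hsum : ∑ j, π j = 1)
    (hα : 0 < α) (hβ : 0 < β) (hC : 0 < C)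
    (hh : α * d ≤ ∑ k, (h k) ^ 2) (hx : ∑ k, (x k) ^ 2 ≤ β * d)
    (hJexp : ∑ j, π j * ∑ k, (J j k) ^ 2 ≤ C)
    (hJa : ∑ k, (J a k) ^ 2 ≤ C) :
    (∑ k, ∑ l, ((∑ j, J j k * (r * A * ((if j = a then (1 : ℝ) else 0) - π j))) * x l) ^ 2)
        / (∑ j, ∑ k, ((r * A * ((if j = a then (1 : ℝ) else 0) - π j)) * h k) ^ 2)
      ≤ (4 * β * C / α) * (1 / (1 - π a) ^ 2) := by
  have h1a : (0:ℝ) < 1 - π a := by linarith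
  have hrA : r * A ≠ 0 := mul_ne_zero hr.ne' hA
  have hrA2 : (0:ℝ) < (r * A) ^ 2 := pow_two_pos_of_ne_zero hrA
  have hdR : (1:ℝ) ≤ (d:ℝ) := by exact_mod_cast hd
  -- split numerator
  have hnum : (∑ k, ∑ l, ((∑ j, J j k * (r * A * ((if j = a then (1 : ℝ) else 0) - π j))) * x l) ^ 2)
      = (∑ k, (∑ j, J j k * (r * A * ((if j = a then (1 : ℝ) else 0) - π j))) ^ 2) * (∑ l, (x l) ^ 2) := by
    rw [Finset.sum_mul]
    refine Finset.sum_congr rfl fun k _ => ?_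
    rw [Finset.mul_sum]
    exact Finset.sum_congr rfl fun l _ => by ring
  -- split denominator
  have hden : (∑ j, ∑ k, ((r * A * ((if j = a then (1 : ℝ) else 0) - π j)) * h k) ^ 2)
      = (∑ j, (r * A * ((if j = a then (1 : ℝ) else 0) - π j)) ^ 2) * (∑ k, (h k) ^ 2) := by
    rw [Finset.sum_mul]
    refine Finset.sum_congr rfl fun j _ => ?_
    rw [Finset.mul_sum]
    exact Finset.sum_congr rfl fun k _ => by ring
  rw [hnum, hden]
  -- rewrite inner sum for each k
  have key : ∀ k, (∑ j, J j k * (r * A * ((if j = a then (1 : ℝ) else 0) - π j)))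
      = r * A * (J a k - ∑ j, π j * J j k) := by
    intro k
    have e1 : ∀ j, J j k * (r * A * ((if j = a then (1 : ℝ) else 0) - π j))
        = r * A * ((if j = a then J j k else 0) - π j * J j k) := by
      intro j; by_cases hj : j = a <;> simp [hj] <;> ring
    rw [Finset.sum_congr rfl fun j _ => e1 j, ← Finset.mul_sum,
      Finset.sum_sub_distrib, Finset.sum_ite_eq' Finset.univ a (fun j => J j k)]
    simp
  -- bound on ∑ s_k^2 via Cauchy–Schwarz
  have hs : (∑ k : Fin d', (∑ j, π j * J j k) ^ 2) ≤ C := by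
    have hptw : ∀ k : Fin d', (∑ j, π j * J j k) ^ 2 ≤ ∑ j, π j * (J j k) ^ 2 := by
      intro k
      have := Finset.sum_mul_sq_le_sq_mul_sq Finset.univ
        (fun j => Real.sqrt (π j)) (fun j => Real.sqrt (π j) * J j k)
      have e2 : ∀ j : Fin v, Real.sqrt (π j) * (Real.sqrt (π j) * J j k) = π j * J j k := by
        intro j; rw [← mul_assoc, Real.mul_self_sqrt (hnn j)]
      have e3 : ∀ j : Fin v, Real.sqrt (π j) ^ 2 = π j := fun j => Real.sq_sqrt (hnn j)
      have e4 : ∀ j : Fin v, (Real.sqrt (π j) * J j k) ^ 2 = π j * (J j k) ^ 2 := by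
        intro j; rw [mul_pow, e3]
      simp only [e2, e3, e4] at this
      calc (∑ j, π j * J j k) ^ 2 ≤ (∑ j, π j) * (∑ j, π j * (J j k) ^ 2) := this
        _ = ∑ j, π j * (J j k) ^ 2 := by rw [hsum, one_mul]
    calc (∑ k : Fin d', (∑ j, π j * J j k) ^ 2)
        ≤ ∑ k : Fin d', ∑ j, π j * (J j k) ^ 2 := Finset.sum_le_sum fun k _ => hptw k
      _ = ∑ j, π j * ∑ k, (J j k) ^ 2 := by
          rw [Finset.sum_comm]; exact Finset.sum_congr rfl fun j _ => by rw [Finset.mul_sum]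
      _ ≤ C := hJexp
  -- bound on ∑ u_k^2
  have hu : (∑ k, (∑ j, J j k * (r * A * ((if j = a then (1 : ℝ) else 0) - π j))) ^ 2)
      ≤ (r * A) ^ 2 * (4 * C) := by
    have : (∑ k, (∑ j, J j k * (r * A * ((if j = a then (1 : ℝ) else 0) - π j))) ^ 2)
        = (r * A) ^ 2 * ∑ k : Fin d', (J a k - ∑ j, π j * J j k) ^ 2 := by
      rw [Finset.mul_sum]
      exact Finset.sum_congr rfl fun k _ => by rw [key k]; ring
    rw [this]
    have hbound : (∑ k : Fin d', (J a k - ∑ j, π j * J j k) ^ 2) ≤ 4 * C := by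
      have hptw : ∀ k : Fin d', (J a k - ∑ j, π j * J j k) ^ 2
          ≤ 2 * (J a k) ^ 2 + 2 * (∑ j, π j * J j k) ^ 2 := by
        intro k; nlinarith [sq_nonneg (J a k + ∑ j, π j * J j k)]
      calc (∑ k : Fin d', (J a k - ∑ j, π j * J j k) ^ 2)
          ≤ ∑ k : Fin d', (2 * (J a k) ^ 2 + 2 * (∑ j, π j * J j k) ^ 2) :=
            Finset.sum_le_sum fun k _ => hptw k
        _ = 2 * (∑ k, (J a k) ^ 2) + 2 * (∑ k : Fin d', (∑ j, π j * J j k) ^ 2) := by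
            rw [Finset.sum_add_distrib, ← Finset.mul_sum, ← Finset.mul_sum]
        _ ≤ 4 * C := by linarith
    exact mul_le_mul_of_nonneg_left hbound (le_of_lt hrA2)
  -- lower bound for ∑ E_j^2
  have hEl : (r * A) ^ 2 * (1 - π a) ^ 2 ≤ ∑ j, (r * A * ((if j = a then (1 : ℝ) else 0) - π j)) ^ 2 := by
    have := Finset.single_le_sum
      (f := fun j => (r * A * ((if j = a then (1 : ℝ) else 0) - π j)) ^ 2)
      (fun i _ => sq_nonneg _) (Finset.mem_univ a)
    simpa [mul_pow] using this
  -- combine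
  have hN : (∑ k, (∑ j, J j k * (r * A * ((if j = a then (1 : ℝ) else 0) - π j))) ^ 2) * (∑ l, (x l) ^ 2)
      ≤ ((r * A) ^ 2 * (4 * C)) * (β * d) := by
    have hx0 : (0:ℝ) ≤ ∑ l, (x l) ^ 2 := Finset.sum_nonneg fun l _ => sq_nonneg _
    have hu0 : (0:ℝ) ≤ ∑ k, (∑ j, J j k * (r * A * ((if j = a then (1 : ℝ) else 0) - π j))) ^ 2 :=
      Finset.sum_nonneg fun k _ => sq_nonneg _
    exact mul_le_mul hu hx hx0 (by positivity)
  have hD : ((r * A) ^ 2 * (1 - π a) ^ 2) * (α * d)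
      ≤ (∑ j, (r * A * ((if j = a then (1 : ℝ) else 0) - π j)) ^ 2) * (∑ k, (h k) ^ 2) := by
    have h0 : (0:ℝ) ≤ α * d := by positivity
    exact mul_le_mul hEl hh h0 (Finset.sum_nonneg fun j _ => sq_nonneg _)
  have hDpos : (0:ℝ) < ((r * A) ^ 2 * (1 - π a) ^ 2) * (α * d) := by positivity
  calc (∑ k, (∑ j, J j k * (r * A * ((if j = a then (1 : ℝ) else 0) - π j))) ^ 2) * (∑ l, (x l) ^ 2)
        / ((∑ j, (r * A * ((if j = a then (1 : ℝ) else 0) - π j)) ^ 2) * (∑ k, (h k) ^ 2))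
      ≤ (((r * A) ^ 2 * (4 * C)) * (β * d)) / (((r * A) ^ 2 * (1 - π a) ^ 2) * (α * d)) :=
        div_le_div₀ (by positivity) hN hDpos hD
    _ = (4 * β * C / α) * (1 / (1 - π a) ^ 2) := by
        have hd0 : (d:ℝ) ≠ 0 := by linarith
        field_simp
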